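/- Let T>0, λ>0, γ≥0, x₁≥x₂≥0 with x₁>0, and 0<t<T. For a>0 define X₁*(t;a) = (1/2)·[(x₁+x₂)·e^{−γt/(6λ)}·sinh((T−t)√(γ²+12aλ)/(6λ))/sinh(T√(γ²+12aλ)/(6λ)) + (x₁−x₂)·e^{γt/(2λ)}·sinh((T−t)√(γ²+4aλ)/(2λ))/sinh(T√(γ²+4aλ)/(2λ))]. Then a ↦ X₁*(t;a) is strictly decreasing on (0,∞). -/

import Mathlib

open Set

lemma lemA (x : ℝ) (hx : 0 < x) : Real.sinh x < x * Real.cosh x := by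
  have h : StrictMonoOn (fun y : ℝ => y * Real.cosh y - Real.sinh y) (Set.Ici 0) := by
    apply strictMonoOn_of_deriv_pos (convex_Ici 0)
    · fun_prop
    · intro y hy
      rw [interior_Ici] at hy
      have hy' : (0:ℝ) < y := hy
      have h1 : HasDerivAt (fun y : ℝ => y * Real.cosh y - Real.sinh y)
          (1 * Real.cosh y + y * Real.sinh y - Real.cosh y) y :=
        ((hasDerivAt_id y).mul (Real.hasDerivAt_cosh y)).sub (Real.hasDerivAt_sinh y)
      rw [h1.deriv]
      have := Real.sinh_pos_iff.mpr hy'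
      nlinarith
  have := h Set.self_mem_Ici (Set.mem_Ici.mpr hx.le) hx
  simp only [Real.sinh_zero, Real.cosh_zero] at this
  linarith

lemma lemB {u v : ℝ} (hu : 0 < u) (huv : u < v) : v * Real.sinh u < u * Real.sinh v := by
  have hv : 0 < v := hu.trans huv
  have h : StrictMonoOn (fun y : ℝ => Real.sinh y / y) (Set.Ioi 0) := by
    apply strictMonoOn_of_deriv_pos (convex_Ioi 0)
    · exact ContinuousOn.div (by fun_prop) (by fun_prop) (fun y hy => ne_of_gt hy)
    · intro y hy
      rw [interior_Ioi] at hy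
      have hy' : (0:ℝ) < y := hy
      have h1 : HasDerivAt (fun y : ℝ => Real.sinh y / y)
          ((Real.cosh y * y - Real.sinh y * 1) / y ^ 2) y :=
        (Real.hasDerivAt_sinh y).div (hasDerivAt_id y) (ne_of_gt hy)
      rw [h1.deriv]
      apply div_pos _ (by positivity)
      have := lemA y hy
      nlinarith
  have := h (Set.mem_Ioi.mpr hu) (Set.mem_Ioi.mpr hv) huv
  rw [div_lt_div_iff₀ hu hv] at this
  linarith

lemma lemC {x y : ℝ} (hx : 0 < x) (hxy : x < y) :
    x * Real.cosh x * Real.sinh y < y * Real.sinh x * Real.cosh y := by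
  have key := lemB (u := y - x) (v := x + y) (by linarith) (by linarith)
  have h1 : Real.sinh (x + y) = Real.sinh x * Real.cosh y + Real.cosh x * Real.sinh y :=
    Real.sinh_add x y
  have h2 : Real.sinh (y - x) = Real.sinh y * Real.cosh x - Real.cosh y * Real.sinh x :=
    Real.sinh_sub y x
  rw [h1, h2] at key
  nlinarith

lemma lemD {s t : ℝ} (hs : 0 < s) (hst : s < t) :
    StrictAntiOn (fun c => Real.sinh (s * c) / Real.sinh (t * c)) (Set.Ioi 0) := by
  have ht : 0 < t := hs.trans hst
  apply strictAntiOn_of_deriv_neg (convex_Ioi 0)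
  · exact ContinuousOn.div (by fun_prop) (by fun_prop)
      (fun c hc => ne_of_gt (Real.sinh_pos_iff.mpr (mul_pos ht hc)))
  · intro c hc
    rw [interior_Ioi] at hc
    have hc' : (0:ℝ) < c := hc
    have hne : Real.sinh (t * c) ≠ 0 := ne_of_gt (Real.sinh_pos_iff.mpr (mul_pos ht hc))
    have h1 : HasDerivAt (fun c : ℝ => Real.sinh (s * c)) (Real.cosh (s * c) * (s * 1)) c :=
      ((hasDerivAt_id c).const_mul s).sinh
    have h2 : HasDerivAt (fun c : ℝ => Real.sinh (t * c)) (Real.cosh (t * c) * (t * 1)) c :=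
      ((hasDerivAt_id c).const_mul t).sinh
    have hd : HasDerivAt (fun c : ℝ => Real.sinh (s * c) / Real.sinh (t * c)) _ c := h1.div h2 hne
    rw [hd.deriv]
    apply div_neg_of_neg_of_pos _ (pow_pos (Real.sinh_pos_iff.mpr (mul_pos ht hc')) 2)
    have := lemC (mul_pos hs hc') (by nlinarith : s * c < t * c)
    nlinarith

/-- Agent 1's two-player equilibrium strategy at time `t`, as a function of
`a = ασ²`. -/
noncomputable def X1star (T lam gam x1 x2 t a : ℝ) : ℝ :=
  (1 / 2) *
    ((x1 + x2) * Real.exp (-(gam * t) / (6 * lam))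
        * Real.sinh ((T - t) * Real.sqrt (gam ^ 2 + 12 * a * lam) / (6 * lam))
        / Real.sinh (T * Real.sqrt (gam ^ 2 + 12 * a * lam) / (6 * lam))
      + (x1 - x2) * Real.exp (gam * t / (2 * lam))
        * Real.sinh ((T - t) * Real.sqrt (gam ^ 2 + 4 * a * lam) / (2 * lam))
        / Real.sinh (T * Real.sqrt (gam ^ 2 + 4 * a * lam) / (2 * lam)))

/-- if `x₁ ≥ x₂ ≥ 0` and `x₁ > 0`, then `a ↦ X₁*(t;a)` is
strictly decreasing on `(0,∞)` for `0 < t < T`. -/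
theorem stmt_9 (T lam gam : ℝ) (hT : 0 < T) (hlam : 0 < lam) (hgam : 0 ≤ gam)
    (x1 x2 : ℝ) (h21 : x2 ≤ x1) (h2 : 0 ≤ x2) (h1 : 0 < x1)
    (t : ℝ) (ht0 : 0 < t) (htT : t < T) :
    StrictAntiOn (fun a => X1star T lam gam x1 x2 t a) (Ioi 0) := by
  intro a ha b hb hab
  have ha' : (0:ℝ) < a := ha
  have hb' : (0:ℝ) < b := hb
  have hs : 0 < T - t := by linarith
  have hstT : T - t < T := by linarith
  -- the four c-values
  have hpa1 : 0 < gam ^ 2 + 12 * a * lam := by nlinarith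
  have hpb1 : 0 < gam ^ 2 + 12 * b * lam := by nlinarith
  have hpa2 : 0 < gam ^ 2 + 4 * a * lam := by nlinarith
  have hpb2 : 0 < gam ^ 2 + 4 * b * lam := by nlinarith
  have hca1 : 0 < Real.sqrt (gam ^ 2 + 12 * a * lam) / (6 * lam) :=
    div_pos (Real.sqrt_pos.mpr hpa1) (by linarith)
  have hcb1 : 0 < Real.sqrt (gam ^ 2 + 12 * b * lam) / (6 * lam) :=
    div_pos (Real.sqrt_pos.mpr hpb1) (by linarith)
  have hca2 : 0 < Real.sqrt (gam ^ 2 + 4 * a * lam) / (2 * lam) :=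
    div_pos (Real.sqrt_pos.mpr hpa2) (by linarith)
  have hcb2 : 0 < Real.sqrt (gam ^ 2 + 4 * b * lam) / (2 * lam) :=
    div_pos (Real.sqrt_pos.mpr hpb2) (by linarith)
  have hlt1 : Real.sqrt (gam ^ 2 + 12 * a * lam) / (6 * lam)
      < Real.sqrt (gam ^ 2 + 12 * b * lam) / (6 * lam) := by
    gcongr
  have hlt2 : Real.sqrt (gam ^ 2 + 4 * a * lam) / (2 * lam)
      < Real.sqrt (gam ^ 2 + 4 * b * lam) / (2 * lam) := by
    gcongr
  have key1 := lemD hs hstT (Set.mem_Ioi.mpr hca1) (Set.mem_Ioi.mpr hcb1) hlt1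
  have key2 := lemD hs hstT (Set.mem_Ioi.mpr hca2) (Set.mem_Ioi.mpr hcb2) hlt2
  have hK1 : 0 < (x1 + x2) * Real.exp (-(gam * t) / (6 * lam)) :=
    mul_pos (by linarith) (Real.exp_pos _)
  have hK2 : 0 ≤ (x1 - x2) * Real.exp (gam * t / (2 * lam)) :=
    mul_nonneg (by linarith) (Real.exp_pos _).le
  have t1 := mul_lt_mul_of_pos_left key1 hK1
  have t2 := mul_le_mul_of_nonneg_left key2.le hK2
  simp only [X1star, mul_div_assoc]
  simp only [mul_div_assoc] at t1 t2
  linarith
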